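/- The family I = {X ⊆ 2^ω : for every continuous F : 2^ω → 2^ω, F''(X) ≠ 2^ω} is a σ-ideal: it is closed under subsets and countable unions, and contains all singletons. -/

import Mathlib

/-! Via `Nat.pair`, a point `y` of `ℕ → α` is a sequence of points `k ↦ y (pair n k)`, its
slices. If `F` is continuous then so is each slice of `F`; when `X n ∈ contIdeal`, the `n`-th
slice of `F` misses some `z n` on `X n`, and the point whose slices are the `z n` is then not in
`F '' ⋃ n, X n`. -/

/-- The family of subsets of Cantor space no continuous image of which is all of `2^ω`. -/
def contIdeal : Set (Set (ℕ → Bool)) :=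
  {X | ∀ F : (ℕ → Bool) → (ℕ → Bool), Continuous F → F '' X ≠ Set.univ}

def pairSlice {α : Type*} (n : ℕ) (y : ℕ → α) : ℕ → α :=
  fun k => y (Nat.pair n k)

theorem continuous_pairSlice {α : Type*} [TopologicalSpace α] (n : ℕ) :
    Continuous (pairSlice (α := α) n) :=
  continuous_pi fun _ => continuous_apply _

theorem pairSlice_unpair {α : Type*} (z : ℕ → ℕ → α) (n : ℕ) :
    pairSlice n (fun m => z m.unpair.1 m.unpair.2) = z n := by
  funext k
  simp only [pairSlice, Nat.unpair_pair]

theorem iUnion_ne_univ_of_image_pairSlice_ne_univ {α : Type*} (T : ℕ → Set (ℕ → α))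
    (hT : ∀ n, pairSlice n '' T n ≠ Set.univ) : ⋃ n, T n ≠ Set.univ := by
  choose z hz using fun n => (Set.ne_univ_iff_exists_notMem _).1 (hT n)
  intro hU
  obtain ⟨n, hn⟩ := Set.mem_iUnion.1 (hU ▸ Set.mem_univ (fun m : ℕ => z m.unpair.1 m.unpair.2))
  exact hz n ⟨_, hn, pairSlice_unpair z n⟩

theorem contIdeal_of_subset {X Y : Set (ℕ → Bool)} (hYX : Y ⊆ X) (hX : X ∈ contIdeal) :
    Y ∈ contIdeal :=
  fun F hF hY => hX F hF (Set.eq_univ_of_univ_subset (hY ▸ Set.image_mono hYX))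

theorem iUnion_mem_contIdeal {X : ℕ → Set (ℕ → Bool)} (hX : ∀ n, X n ∈ contIdeal) :
    (⋃ n, X n) ∈ contIdeal := by
  intro F hF
  rw [Set.image_iUnion]
  refine iUnion_ne_univ_of_image_pairSlice_ne_univ _ fun n => ?_
  rw [← Set.image_comp]
  exact hX n _ ((continuous_pairSlice n).comp hF)

theorem singleton_mem_contIdeal (x : ℕ → Bool) : {x} ∈ contIdeal := by
  intro F _
  rw [Set.image_singleton]
  exact Set.singleton_ne_univ (F x)

theorem stmt8 :
    (∀ X Y : Set (ℕ → Bool), Y ⊆ X → X ∈ contIdeal → Y ∈ contIdeal) ∧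
    (∀ X : ℕ → Set (ℕ → Bool), (∀ n, X n ∈ contIdeal) → (⋃ n, X n) ∈ contIdeal) ∧
    (∀ x : ℕ → Bool, {x} ∈ contIdeal) :=
  ⟨fun _ _ => contIdeal_of_subset, fun _ => iUnion_mem_contIdeal, singleton_mem_contIdeal⟩
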